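/- For every k₀ > 0 there exists C > 0 such that for all ζ ∈ ℂ with Im ζ ≥ 0 and |ζ| ≥ k₀, and all x ≥ 0, one has |p(x,ζ)| ≤ C e^{−Im(ζ)x} |ζ|^{−1} ∫ₓ^∞ |v(y)| dy. -/

import Mathlib

/-!
Put `f x = e^{Im ζ · x} ‖θ(x, ζ)‖`. Since `‖sin (ζ (x - y))‖ ≤ e^{Im ζ · (y - x)}` for `x ≤ y`, the
integral equation gives `‖p(x, ζ)‖ ≤ ‖ζ‖⁻¹ e^{-Im ζ · x} ∫ₓ^∞ |v| f`, hence the tail Grönwall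
inequality `f x ≤ 1 + k₀⁻¹ ∫ₓ^∞ |v| f`. On a stretch `[x, x']` of weight `k₀⁻¹ ∫ₓ^{x'} |v| = 1/2`
this yields `∫ₓ^∞ |v| f ≤ k₀ + 2 ∫_{x'}^∞ |v| f`, so each stretch at most doubles the bound, and
`[0, ∞)` is covered by about `2 k₀⁻¹ ‖v‖₁` stretches. The bound on `f` is therefore uniform in
`ζ`, and plugging it back into the estimate for `p` gives the theorem.
-/

open MeasureTheory Set Filter Topology

theorem MeasureTheory.IntegrableOn.intervalIntegrable_of_Ioi {g : ℝ → ℝ} {μ : Measure ℝ} {a : ℝ}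
    (hg : IntegrableOn g (Ioi a) μ) {x y : ℝ} (hx : a ≤ x) (hy : a ≤ y) :
    IntervalIntegrable g μ x y :=
  intervalIntegrable_iff.2 (hg.mono_set (Ioc_subset_Ioi_self.trans (Ioi_subset_Ioi (le_min hx hy))))

theorem continuousOn_integral_Ioi {g : ℝ → ℝ} {a : ℝ} (hg : IntegrableOn g (Ioi a)) :
    ContinuousOn (fun x => ∫ t in Ioi x, g t) (Ici a) := by
  have htail : EqOn (fun x => ∫ t in Ioi x, g t)
      (fun x => (∫ t in Ioi a, g t) - ∫ t in a..x, g t) (Ici a) := fun x hx => by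
    simp only [← intervalIntegral.integral_Ioi_sub_Ioi hg hx, sub_sub_cancel]
  refine ContinuousOn.congr (fun x hx => ?_) htail
  have hprim := intervalIntegral.continuousOn_primitive_interval'
    (hg.intervalIntegrable_of_Ioi le_rfl (hx.out.trans (lt_add_one x).le)) left_mem_uIcc
  rw [uIcc_of_le (hx.out.trans (lt_add_one x).le), ← Ici_inter_Iic] at hprim
  exact ((continuousOn_const.sub hprim) x ⟨hx, (lt_add_one x).le⟩).mono_of_mem_nhdsWithin
    (inter_mem_nhdsWithin _ (Iic_mem_nhds (lt_add_one x)))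

section TailGronwall

variable {w f : ℝ → ℝ} {a c : ℝ}

theorem setIntegral_Ioi_le_of_le {g : ℝ → ℝ} (hg : IntegrableOn g (Ioi a)) (hg0 : 0 ≤ g)
    {x y : ℝ} (hax : a ≤ x) (hxy : x ≤ y) : ∫ t in Ioi y, g t ≤ ∫ t in Ioi x, g t :=
  setIntegral_mono_set (hg.mono_set (Ioi_subset_Ioi hax)) (Eventually.of_forall hg0)
    (Ioi_subset_Ioi hxy).eventuallyLE

theorem mul_integral_Ioi_le_one_add_two_mul (hw : IntegrableOn w (Ioi a))
    (hwf : IntegrableOn (fun y => w y * f y) (Ioi a)) (hw0 : 0 ≤ w) (hf0 : 0 ≤ f) (hc : 0 ≤ c)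
    (hf : ∀ x ∈ Ici a, f x ≤ 1 + c * ∫ y in Ioi x, w y * f y)
    {x x' : ℝ} (hax : a ≤ x) (hxx' : x ≤ x') (hm : c * ∫ y in x..x', w y ≤ 1 / 2) :
    c * ∫ y in Ioi x, w y * f y ≤ 1 + 2 * (c * ∫ y in Ioi x', w y * f y) := by
  have hwf0 : 0 ≤ fun y => w y * f y := fun y => mul_nonneg (hw0 y) (hf0 y)
  set J := fun t => ∫ y in Ioi t, w y * f y
  have hsplit : J x = (∫ y in x..x', w y * f y) + J x' :=
    (intervalIntegral.integral_interval_add_Ioi (hwf.mono_set (Ioi_subset_Ioi hax))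
      (hwf.mono_set (Ioi_subset_Ioi (hax.trans hxx')))).symm
  have hchunk : ∫ y in x..x', w y * f y ≤ (∫ y in x..x', w y) * (1 + c * J x) := by
    rw [← intervalIntegral.integral_mul_const]
    refine intervalIntegral.integral_mono_on hxx' (hwf.intervalIntegrable_of_Ioi hax
      (hax.trans hxx')) ((hw.intervalIntegrable_of_Ioi hax (hax.trans hxx')).mul_const _)
      fun y hy => mul_le_mul_of_nonneg_left ?_ (hw0 y)
    have hJ : J y ≤ J x := setIntegral_Ioi_le_of_le hwf hwf0 hax hy.1
    linarith [hf y (hax.trans hy.1), mul_le_mul_of_nonneg_left hJ hc]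
  have hJ0 : 0 ≤ J x := setIntegral_nonneg measurableSet_Ioi fun y _ => hwf0 y
  nlinarith [mul_le_mul_of_nonneg_left hchunk hc,
    mul_le_mul_of_nonneg_right hm (by positivity : 0 ≤ 1 + c * J x)]

theorem mul_integral_Ioi_le_two_pow_sub_one (hw : IntegrableOn w (Ioi a))
    (hwf : IntegrableOn (fun y => w y * f y) (Ioi a)) (hw0 : 0 ≤ w) (hf0 : 0 ≤ f) (hc : 0 < c)
    (hf : ∀ x ∈ Ici a, f x ≤ 1 + c * ∫ y in Ioi x, w y * f y) (n : ℕ) {x : ℝ} (hax : a ≤ x)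
    (hW : c * ∫ y in Ioi x, w y ≤ (n + 1) / 2) :
    c * ∫ y in Ioi x, w y * f y ≤ 2 ^ (n + 1) - 1 := by
  have hgap : ∀ {x x'}, a ≤ x → x ≤ x' →
      c * ∫ y in x..x', w y = c * (∫ y in Ioi x, w y) - c * ∫ y in Ioi x', w y := by
    intro x x' hax hxx'
    rw [← mul_sub, intervalIntegral.integral_Ioi_sub_Ioi (hw.mono_set (Ioi_subset_Ioi hax)) hxx']
  have hW0 : ∀ x', 0 ≤ ∫ y in Ioi x', w y := fun x' =>
    setIntegral_nonneg measurableSet_Ioi fun y _ => hw0 y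
  induction n generalizing x with
  | zero =>
    -- the whole tail is one stretch, with an empty remainder at infinity
    have hlim : Tendsto (fun x' => 1 + 2 * (c * ∫ y in Ioi x', w y * f y)) atTop (𝓝 1) := by
      simpa using (((tendsto_integral_Ioi_zero tendsto_id).const_mul c).const_mul 2).const_add 1
    have hchunk : ∀ᶠ x' in atTop, c * ∫ y in Ioi x, w y * f y ≤
        1 + 2 * (c * ∫ y in Ioi x', w y * f y) := by
      filter_upwards [eventually_ge_atTop x] with x' hxx'
      refine mul_integral_Ioi_le_one_add_two_mul hw hwf hw0 hf0 hc.le hf hax hxx' ?_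
      rw [hgap hax hxx']
      norm_num at hW
      nlinarith [mul_nonneg hc.le (hW0 x')]
    norm_num
    exact ge_of_tendsto hlim hchunk
  | succ n ih =>
    by_cases hsmall : c * ∫ y in Ioi x, w y ≤ (n + 1) / 2
    · calc c * ∫ y in Ioi x, w y * f y ≤ 2 ^ (n + 1) - 1 := ih hax hsmall
        _ ≤ 2 ^ (n + 1 + 1) - 1 := by gcongr <;> norm_num
    push Not at hsmall
    -- cut off a first stretch of weight exactly `1/2`
    obtain ⟨y₀, hxy₀, hy₀⟩ : ∃ y₀, x ≤ y₀ ∧ c * ∫ y in Ioi y₀, w y < (n + 1) / 2 := by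
      have hlim : Tendsto (fun x' => c * ∫ y in Ioi x', w y) atTop (𝓝 0) := by
        simpa using (tendsto_integral_Ioi_zero tendsto_id).const_mul c
      exact ((eventually_ge_atTop x).and (hlim.eventually_lt_const (by positivity))).exists
    have hcont : ContinuousOn (fun x' => c * ∫ y in Ioi x', w y) (Icc x y₀) :=
      ((continuousOn_integral_Ioi hw).mono fun t ht => hax.trans ht.1).const_mul c
    obtain ⟨x', ⟨hxx', -⟩, hx'⟩ := intermediate_value_Icc' hxy₀ hcont ⟨hy₀.le, hsmall.le⟩
    have hrest := ih (hax.trans hxx') hx'.le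
    have hfirst := mul_integral_Ioi_le_one_add_two_mul hw hwf hw0 hf0 hc.le hf hax hxx'
      (by rw [hgap hax hxx']; push_cast at hW; linarith)
    calc c * ∫ y in Ioi x, w y * f y ≤ 1 + 2 * (2 ^ (n + 1) - 1) := by linarith
      _ = 2 ^ (n + 1 + 1) - 1 := by ring

theorem le_two_pow_of_le_one_add_mul_integral_Ioi (hw : IntegrableOn w (Ioi a))
    (hwf : IntegrableOn (fun y => w y * f y) (Ioi a)) (hw0 : 0 ≤ w) (hf0 : 0 ≤ f) (hc : 0 < c)
    (hf : ∀ x ∈ Ici a, f x ≤ 1 + c * ∫ y in Ioi x, w y * f y) (n : ℕ)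
    (hW : c * ∫ y in Ioi a, w y ≤ (n + 1) / 2) {x : ℝ} (hax : a ≤ x) :
    f x ≤ 2 ^ (n + 1) := by
  have hWx : c * ∫ y in Ioi x, w y ≤ (n + 1) / 2 :=
    (mul_le_mul_of_nonneg_left (setIntegral_Ioi_le_of_le hw hw0 le_rfl hax) hc.le).trans hW
  linarith [hf x hax, mul_integral_Ioi_le_two_pow_sub_one hw hwf hw0 hf0 hc hf n hax hWx]

end TailGronwall

theorem Complex.norm_sin_le_exp_abs_im (z : ℂ) : ‖Complex.sin z‖ ≤ Real.exp |z.im| := by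
  have h₁ : ‖Complex.exp (-z * Complex.I)‖ ≤ Real.exp |z.im| := by
    rw [Complex.norm_exp]; gcongr; simp [le_abs_self]
  have h₂ : ‖Complex.exp (z * Complex.I)‖ ≤ Real.exp |z.im| := by
    rw [Complex.norm_exp]; gcongr; simp [neg_le_abs]
  calc ‖Complex.sin z‖ = ‖Complex.exp (-z * Complex.I) - Complex.exp (z * Complex.I)‖ / 2 := by
        simp [Complex.sin]
    _ ≤ (‖Complex.exp (-z * Complex.I)‖ + ‖Complex.exp (z * Complex.I)‖) / 2 := by
        gcongr; exact norm_sub_le _ _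
    _ ≤ Real.exp |z.im| := by linarith

theorem integrableOn_Ioi_zero_of_abs_le_rpow {v : ℝ → ℝ} (hv_meas : AEStronglyMeasurable v)
    {C ρ : ℝ} (hρ : 1 < ρ) (hv : ∀ x : ℝ, 0 ≤ x → |v x| ≤ C * (1 + x) ^ (-ρ)) :
    IntegrableOn v (Ioi 0) := by
  have hdecay : Integrable fun x : ℝ => C * (1 + ‖x‖) ^ (-ρ) :=
    (integrable_one_add_norm (by simpa using hρ)).const_mul C
  refine hdecay.integrableOn.mono' hv_meas.restrict ?_
  filter_upwards [ae_restrict_mem measurableSet_Ioi] with x hx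
  rw [Real.norm_eq_abs, Real.norm_of_nonneg hx.out.le]
  exact hv x hx.out.le

section Jost

variable {v : ℝ → ℝ} {θ : ℝ → ℂ} {ζ : ℂ} {x : ℝ}

theorem norm_sin_mul_sub_le (hζ : 0 ≤ ζ.im) {y : ℝ} (hxy : x ≤ y) :
    ‖Complex.sin (ζ * ((x : ℂ) - (y : ℂ)))‖ ≤ Real.exp (ζ.im * (y - x)) := by
  refine (Complex.norm_sin_le_exp_abs_im _).trans_eq ?_
  have him : (ζ * ((x : ℂ) - (y : ℂ))).im = -(ζ.im * (y - x)) := by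
    simp [Complex.mul_im]; ring
  rw [him, abs_neg, abs_of_nonneg (mul_nonneg hζ (sub_nonneg.2 hxy))]

theorem integrableOn_abs_mul_exp_mul_norm (hv : IntegrableOn (fun y => |v y|) (Ioi 0))
    (hθ : ContinuousOn θ (Ici 0)) {M : ℝ} (hM : ∀ y : ℝ, 0 ≤ y → Real.exp (ζ.im * y) * ‖θ y‖ ≤ M) :
    IntegrableOn (fun y => |v y| * (Real.exp (ζ.im * y) * ‖θ y‖)) (Ioi 0) := by
  have hmeas : AEStronglyMeasurable (fun y => Real.exp (ζ.im * y) * ‖θ y‖)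
      (volume.restrict (Ioi 0)) :=
    ((Real.continuous_exp.comp (continuous_const.mul continuous_id)).continuousOn.mul
      hθ.norm).aestronglyMeasurable measurableSet_Ici |>.mono_measure
      (Measure.restrict_mono Ioi_subset_Ici_self le_rfl)
  refine hv.mul_bdd (c := M) hmeas ?_
  filter_upwards [ae_restrict_mem measurableSet_Ioi] with y hy
  rw [Real.norm_of_nonneg (by positivity)]
  exact hM y hy.out.le

theorem norm_sub_cexp_le_of_eq_cexp_add_integral (hζ : 0 ≤ ζ.im)
    (hint : IntegrableOn (fun y => |v y| * (Real.exp (ζ.im * y) * ‖θ y‖)) (Ioi x))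
    (heq : θ x = Complex.exp (Complex.I * ζ * x) +
      ζ⁻¹ * ∫ y in Ioi x, Complex.sin (ζ * ((x : ℂ) - (y : ℂ))) * (v y : ℂ) * θ y) :
    ‖θ x - Complex.exp (Complex.I * ζ * x)‖ ≤
      ‖ζ‖⁻¹ * (Real.exp (-(ζ.im * x)) *
        ∫ y in Ioi x, |v y| * (Real.exp (ζ.im * y) * ‖θ y‖)) := by
  rw [heq, add_sub_cancel_left, norm_mul, norm_inv, ← integral_const_mul]
  gcongr
  refine norm_integral_le_of_norm_le (hint.const_mul _) ?_
  filter_upwards [ae_restrict_mem measurableSet_Ioi] with y hy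
  calc ‖Complex.sin (ζ * ((x : ℂ) - (y : ℂ))) * (v y : ℂ) * θ y‖
      ≤ Real.exp (ζ.im * (y - x)) * |v y| * ‖θ y‖ := by
        rw [norm_mul, norm_mul, Complex.norm_real, Real.norm_eq_abs]
        gcongr
        exact norm_sin_mul_sub_le hζ hy.out.le
    _ = Real.exp (-(ζ.im * x)) * (|v y| * (Real.exp (ζ.im * y) * ‖θ y‖)) := by
        rw [show ζ.im * (y - x) = -(ζ.im * x) + ζ.im * y by ring, Real.exp_add]; ring

theorem exp_mul_norm_le_one_add_integral (hζ : 0 ≤ ζ.im)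
    (hint : IntegrableOn (fun y => |v y| * (Real.exp (ζ.im * y) * ‖θ y‖)) (Ioi x))
    (heq : θ x = Complex.exp (Complex.I * ζ * x) +
      ζ⁻¹ * ∫ y in Ioi x, Complex.sin (ζ * ((x : ℂ) - (y : ℂ))) * (v y : ℂ) * θ y) :
    Real.exp (ζ.im * x) * ‖θ x‖ ≤
      1 + ‖ζ‖⁻¹ * ∫ y in Ioi x, |v y| * (Real.exp (ζ.im * y) * ‖θ y‖) := by
  have hexp : ‖Complex.exp (Complex.I * ζ * x)‖ = Real.exp (-(ζ.im * x)) := by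
    simp [Complex.norm_exp]
  have hθ : ‖θ x‖ ≤ Real.exp (-(ζ.im * x)) * (1 + ‖ζ‖⁻¹ *
      ∫ y in Ioi x, |v y| * (Real.exp (ζ.im * y) * ‖θ y‖)) := by
    calc ‖θ x‖ ≤ ‖Complex.exp (Complex.I * ζ * x)‖ + ‖θ x - Complex.exp (Complex.I * ζ * x)‖ :=
          norm_le_insert' _ _
      _ ≤ _ := by
          rw [hexp]
          linarith [norm_sub_cexp_le_of_eq_cexp_add_integral hζ hint heq]
  calc Real.exp (ζ.im * x) * ‖θ x‖
      ≤ Real.exp (ζ.im * x) * (Real.exp (-(ζ.im * x)) * (1 + ‖ζ‖⁻¹ *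
        ∫ y in Ioi x, |v y| * (Real.exp (ζ.im * y) * ‖θ y‖))) := by gcongr
    _ = _ := by rw [← mul_assoc, ← Real.exp_add, add_neg_cancel, Real.exp_zero, one_mul]

end Jost

theorem jost_solution_high_energy_estimate_general
    (v : ℝ → ℝ) (hv_meas : Measurable v) (C₀ ρ : ℝ)
    (hρ : 2 < ρ)
    (hv : ∀ x : ℝ, 0 ≤ x → |v x| ≤ C₀ * (1 + x) ^ (-ρ))
    (θ : ℂ → ℝ → ℂ)
    (hθcont : ∀ ζ : ℂ, 0 ≤ ζ.im → ζ ≠ 0 → ContinuousOn (θ ζ) (Set.Ici 0))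
    (hθbdd : ∀ ζ : ℂ, 0 ≤ ζ.im → ζ ≠ 0 →
      ∃ M : ℝ, ∀ x : ℝ, 0 ≤ x → Real.exp (ζ.im * x) * ‖θ ζ x‖ ≤ M)
    (hθeq : ∀ ζ : ℂ, 0 ≤ ζ.im → ζ ≠ 0 → ∀ x : ℝ, 0 ≤ x →
      θ ζ x = Complex.exp (Complex.I * ζ * x) +
        ζ⁻¹ * ∫ y in Set.Ioi x, Complex.sin (ζ * ((x : ℂ) - (y : ℂ))) * (v y : ℂ) * θ ζ y) :
    ∀ k₀ : ℝ, 0 < k₀ → ∃ C : ℝ, 0 < C ∧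
      ∀ ζ : ℂ, 0 ≤ ζ.im → k₀ ≤ ‖ζ‖ → ∀ x : ℝ, 0 ≤ x →
        ‖θ ζ x - Complex.exp (Complex.I * ζ * x)‖ ≤
          C * Real.exp (-(ζ.im * x)) * ‖ζ‖⁻¹ * ∫ y in Set.Ioi x, |v y| := by
  intro k₀ hk₀
  have hv_int : IntegrableOn (fun y => |v y|) (Ioi 0) :=
    (integrableOn_Ioi_zero_of_abs_le_rpow hv_meas.aestronglyMeasurable (by linarith) hv).abs
  obtain ⟨n, hn⟩ := exists_nat_ge (2 * k₀⁻¹ * ∫ y in Ioi (0 : ℝ), |v y|)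
  refine ⟨2 ^ (n + 1), by positivity, fun ζ hζ hk x hx => ?_⟩
  have hζ0 : ζ ≠ 0 := norm_pos_iff.1 (hk₀.trans_le hk)
  set f : ℝ → ℝ := fun y => Real.exp (ζ.im * y) * ‖θ ζ y‖
  obtain ⟨M, hM⟩ := hθbdd ζ hζ hζ0
  have hvf : IntegrableOn (fun y => |v y| * f y) (Ioi 0) :=
    integrableOn_abs_mul_exp_mul_norm hv_int (hθcont ζ hζ hζ0) hM
  have hf : ∀ y ∈ Ici 0, f y ≤ 1 + k₀⁻¹ * ∫ t in Ioi y, |v t| * f t := fun y hy =>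
    (exp_mul_norm_le_one_add_integral hζ (hvf.mono_set (Ioi_subset_Ioi hy))
      (hθeq ζ hζ hζ0 y hy)).trans (by gcongr)
  have hf_le : ∀ y ∈ Ioi x, f y ≤ 2 ^ (n + 1) := fun y hy =>
    le_two_pow_of_le_one_add_mul_integral_Ioi hv_int hvf (fun _ => abs_nonneg _)
      (fun _ => by positivity) (inv_pos.2 hk₀) hf n (by linarith) (hx.trans hy.out.le)
  calc ‖θ ζ x - Complex.exp (Complex.I * ζ * x)‖
      ≤ ‖ζ‖⁻¹ * (Real.exp (-(ζ.im * x)) * ∫ y in Ioi x, |v y| * f y) :=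
        norm_sub_cexp_le_of_eq_cexp_add_integral hζ (hvf.mono_set (Ioi_subset_Ioi hx))
          (hθeq ζ hζ hζ0 x hx)
    _ ≤ ‖ζ‖⁻¹ * (Real.exp (-(ζ.im * x)) * ∫ y in Ioi x, 2 ^ (n + 1) * |v y|) := by
        refine mul_le_mul_of_nonneg_left (mul_le_mul_of_nonneg_left ?_ (Real.exp_pos _).le)
          (by positivity)
        refine setIntegral_mono_on (hvf.mono_set (Ioi_subset_Ioi hx))
          ((hv_int.mono_set (Ioi_subset_Ioi hx)).const_mul _) measurableSet_Ioi fun y hy => ?_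
        rw [mul_comm]
        exact mul_le_mul_of_nonneg_right (hf_le y hy) (abs_nonneg _)
    _ = 2 ^ (n + 1) * Real.exp (-(ζ.im * x)) * ‖ζ‖⁻¹ * ∫ y in Ioi x, |v y| := by
        rw [integral_const_mul]; ring

/-- High-energy estimate for `p(x,ζ) = θ(x,ζ) − e^{iζx}`:
for every `k₀ > 0` there is `C > 0` with
`|p(x,ζ)| ≤ C e^{−Im(ζ)x} |ζ|⁻¹ ∫ₓ^∞ |v(y)| dy` for `|ζ| ≥ k₀`, `Im ζ ≥ 0`. -/
theorem jost_solution_high_energy_estimate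
    (v : ℝ → ℝ) (hv_meas : Measurable v) (C₀ ρ : ℝ)
    (hC₀ : 0 < C₀) (hρ : 2 < ρ)
    (hv : ∀ x : ℝ, 0 ≤ x → |v x| ≤ C₀ * (1 + x) ^ (-ρ))
    (θ : ℂ → ℝ → ℂ)
    (hθcont : ∀ ζ : ℂ, 0 ≤ ζ.im → ζ ≠ 0 → ContinuousOn (θ ζ) (Set.Ici 0))
    (hθbdd : ∀ ζ : ℂ, 0 ≤ ζ.im → ζ ≠ 0 →
      ∃ M : ℝ, ∀ x : ℝ, 0 ≤ x → Real.exp (ζ.im * x) * ‖θ ζ x‖ ≤ M)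
    (hθeq : ∀ ζ : ℂ, 0 ≤ ζ.im → ζ ≠ 0 → ∀ x : ℝ, 0 ≤ x →
      θ ζ x = Complex.exp (Complex.I * ζ * x) +
        ζ⁻¹ * ∫ y in Set.Ioi x, Complex.sin (ζ * ((x : ℂ) - (y : ℂ))) * (v y : ℂ) * θ ζ y) :
    ∀ k₀ : ℝ, 0 < k₀ → ∃ C : ℝ, 0 < C ∧
      ∀ ζ : ℂ, 0 ≤ ζ.im → k₀ ≤ ‖ζ‖ → ∀ x : ℝ, 0 ≤ x →
        ‖θ ζ x - Complex.exp (Complex.I * ζ * x)‖ ≤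
          C * Real.exp (-(ζ.im * x)) * ‖ζ‖⁻¹ * ∫ y in Set.Ioi x, |v y| :=
  jost_solution_high_energy_estimate_general v hv_meas C₀ ρ hρ hv θ hθcont hθbdd hθeq
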